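/- (Theorem 1 of the paper.) Let d be a positive natural number, x_i ∈ ℝ^d, σ > 0, c ∈ ℝ, and w ∈ ℝ^d with ‖w‖ > 0. Define the classifier score C(x) := c + ⟨w, x⟩, the hinge loss on the positive class ℓ(C(x), 1) := max(0, 1 − C(x)), and s_i := 1 − (c + ⟨w, x_i⟩). Then the expected loss over x drawn from the isotropic Gaussian N(x_i, σ²I) on ℝ^d satisfies E_{x∼N(x_i, σ²I)}[max(0, 1 − (c + ⟨w, x⟩))] = s_i·Φ(s_i/(σ‖w‖)) + σ‖w‖·φ(s_i/(σ‖w‖)), where Φ and φ are the cdf and pdf of the standard Gaussian N(0,1). -/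

import Mathlib

/-! The score `c + ⟨w, x⟩` of `x ∼ N(x_i, σ²I)` is itself Gaussian, `N(c + ⟨w, x_i⟩, σ²‖w‖²)`, as
one sees by comparing characteristic functions. With `τ = σ‖w‖` the expected loss is therefore
`E[(s_i - τZ)⁺]` for a standard normal `Z`; the integrand vanishes beyond `Z = s_i/τ`, and below it
`s_i` contributes `s_i Φ(s_i/τ)` while `-τZ` contributes `τ φ(s_i/τ)` because `φ' = -zφ`. -/

open MeasureTheory ProbabilityTheory Real

/-- The cdf `Φ` of the standard Gaussian `N(0,1)`. -/
noncomputable def stdGaussianCDF (t : ℝ) : ℝ :=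
  ((gaussianReal 0 1) (Set.Iic t)).toReal

/-- The pdf `φ` of the standard Gaussian `N(0,1)`. -/
noncomputable def stdGaussianPDF (t : ℝ) : ℝ :=
  (1 / Real.sqrt (2 * Real.pi)) * Real.exp (-t ^ 2 / 2)

open scoped NNReal
open Filter Topology Set

section Pi

variable {ι : Type*} [Fintype ι]

lemma pi_gaussianReal_map_sum (m : ι → ℝ) (v : ι → ℝ≥0) :
    (Measure.pi fun i ↦ gaussianReal (m i) (v i)).map (fun x ↦ ∑ i, x i) =
      gaussianReal (∑ i, m i) (∑ i, v i) := by
  refine Measure.ext_of_charFun ?_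
  ext t
  simp_rw [charFun_map_sum_pi_eq_prod, Finset.prod_apply, charFun_gaussianReal,
    ← Complex.exp_sum]
  push_cast
  congr 1
  simp only [Finset.sum_sub_distrib, Finset.mul_sum, Finset.sum_mul, Finset.sum_div]

lemma pi_gaussianReal_map_sum_mul (w m : ι → ℝ) (v : ι → ℝ≥0) :
    (Measure.pi fun i ↦ gaussianReal (m i) (v i)).map (fun x ↦ ∑ i, w i * x i) =
      gaussianReal (∑ i, w i * m i) (∑ i, (w i ^ 2).toNNReal * v i) := by
  have hscale : (Measure.pi fun i ↦ gaussianReal (m i) (v i)).map (fun x i ↦ w i * x i) =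
      Measure.pi fun i ↦ gaussianReal (w i * m i) ((w i ^ 2).toNNReal * v i) := by
    rw [Measure.pi_map_pi fun i ↦ (measurable_const_mul (w i)).aemeasurable]
    simp_rw [gaussianReal_map_const_mul, Real.toNNReal_of_nonneg (sq_nonneg _)]
  rw [← pi_gaussianReal_map_sum, ← hscale, Measure.map_map (by fun_prop) (by fun_prop)]
  rfl

end Pi

lemma gaussianPDFReal_zero_one : gaussianPDFReal 0 1 = stdGaussianPDF := by
  ext t
  simp [gaussianPDFReal, stdGaussianPDF]

lemma hasDerivAt_stdGaussianPDF (t : ℝ) :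
    HasDerivAt stdGaussianPDF (-t * stdGaussianPDF t) t := by
  have h := (((hasDerivAt_pow 2 t).neg.div_const 2).exp).const_mul (1 / √(2 * π))
  refine h.congr_deriv ?_
  simp only [stdGaussianPDF, Pi.neg_apply, Nat.cast_ofNat]
  ring

lemma tendsto_stdGaussianPDF_atBot : Tendsto stdGaussianPDF atBot (𝓝 0) := by
  have hsq : Tendsto (fun t : ℝ ↦ -t ^ 2 / 2) atBot atBot := by
    have := (tendsto_pow_atTop two_ne_zero).comp
      (tendsto_neg_atBot_atTop : Tendsto (fun t : ℝ ↦ -t) atBot atTop)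
    simpa [Function.comp_def, neg_div] using
      tendsto_neg_atTop_atBot.comp (this.atTop_div_const two_pos)
  have h := (tendsto_exp_atBot.comp hsq).const_mul (1 / √(2 * π))
  rwa [mul_zero] at h

lemma integrable_stdGaussianPDF : Integrable stdGaussianPDF :=
  gaussianPDFReal_zero_one ▸ integrable_gaussianPDFReal 0 1

lemma integrable_mul_stdGaussianPDF : Integrable fun z ↦ z * stdGaussianPDF z := by
  have h := (integrable_mul_exp_neg_mul_sq (b := 1 / 2) one_half_pos).const_mul (1 / √(2 * π))
  convert h using 2 with z
  simp only [stdGaussianPDF]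
  ring_nf

lemma integral_Iic_mul_stdGaussianPDF (a : ℝ) :
    ∫ z in Iic a, z * stdGaussianPDF z = -stdGaussianPDF a := by
  have h := integral_Iic_of_hasDerivAt_of_tendsto' (a := a)
    (fun z _ ↦ (hasDerivAt_stdGaussianPDF z).neg.congr_deriv (by rw [neg_mul, neg_neg]))
    integrable_mul_stdGaussianPDF.integrableOn tendsto_stdGaussianPDF_atBot.neg
  rwa [neg_zero, sub_zero] at h

lemma stdGaussianCDF_eq_integral (a : ℝ) : stdGaussianCDF a = ∫ z in Iic a, stdGaussianPDF z := by
  rw [stdGaussianCDF, gaussianReal_apply_eq_integral 0 one_ne_zero,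
    ENNReal.toReal_ofReal (integral_nonneg fun z ↦ gaussianPDFReal_nonneg _ _ _),
    gaussianPDFReal_zero_one]

lemma integral_max_zero_sub_gaussianReal_zero_one (a : ℝ) :
    ∫ z, max 0 (a - z) ∂gaussianReal 0 1 = a * stdGaussianCDF a + stdGaussianPDF a := by
  have hcut : ∀ z, stdGaussianPDF z • max 0 (a - z) =
      (Iic a).indicator (fun z ↦ a * stdGaussianPDF z - z * stdGaussianPDF z) z := by
    intro z
    by_cases hz : z ≤ a
    · rw [indicator_of_mem (mem_Iic.2 hz), max_eq_right (sub_nonneg.2 hz), smul_eq_mul]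
      ring
    · rw [indicator_of_notMem (mt mem_Iic.1 hz), max_eq_left (by linarith [not_le.1 hz]),
        smul_zero]
  rw [integral_gaussianReal_eq_integral_smul one_ne_zero, gaussianPDFReal_zero_one]
  simp_rw [hcut]
  rw [integral_indicator measurableSet_Iic,
    integral_sub (integrable_stdGaussianPDF.const_mul a).integrableOn
      integrable_mul_stdGaussianPDF.integrableOn,
    integral_const_mul, integral_Iic_mul_stdGaussianPDF, ← stdGaussianCDF_eq_integral,
    sub_neg_eq_add]

lemma integral_max_zero_sub_gaussianReal (b m : ℝ) {τ : ℝ} (hτ : 0 < τ) :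
    ∫ y, max 0 (b - y) ∂gaussianReal m (τ ^ 2).toNNReal =
      (b - m) * stdGaussianCDF ((b - m) / τ) + τ * stdGaussianPDF ((b - m) / τ) := by
  have hmap : (gaussianReal 0 1).map (fun z ↦ m + τ * z) = gaussianReal m (τ ^ 2).toNNReal := by
    change (gaussianReal 0 1).map ((m + ·) ∘ (τ * ·)) = _
    rw [← Measure.map_map (measurable_const_add m) (measurable_const_mul τ),
      gaussianReal_map_const_mul, gaussianReal_map_const_add]
    congr 1
    · ring
    · ext
      simp [sq_nonneg]
  have hscale : ∀ z, max 0 (b - (m + τ * z)) = τ * max 0 ((b - m) / τ - z) := by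
    intro z
    rw [mul_max_of_nonneg _ _ hτ.le, mul_zero, mul_sub, mul_div_cancel₀ _ hτ.ne']
    ring_nf
  rw [← hmap, integral_map (by fun_prop) (by fun_prop)]
  simp_rw [hscale]
  rw [integral_const_mul, integral_max_zero_sub_gaussianReal_zero_one]
  field_simp

theorem expected_hinge_loss_closed_form_general
    (d : ℕ) (xi : Fin d → ℝ) (σ : ℝ) (hσ : 0 < σ)
    (c : ℝ) (w : Fin d → ℝ)
    (hw : 0 < Real.sqrt (∑ j, (w j) ^ 2)) :
    (∫ x, max 0 (1 - (c + ∑ j, w j * x j))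
        ∂(Measure.pi fun j => gaussianReal (xi j) (Real.toNNReal (σ ^ 2)))) =
      (1 - (c + ∑ j, w j * xi j)) *
          stdGaussianCDF ((1 - (c + ∑ j, w j * xi j)) / (σ * Real.sqrt (∑ j, (w j) ^ 2))) +
        σ * Real.sqrt (∑ j, (w j) ^ 2) *
          stdGaussianPDF ((1 - (c + ∑ j, w j * xi j)) / (σ * Real.sqrt (∑ j, (w j) ^ 2))) := by
  have hvar : ∑ j, (w j ^ 2).toNNReal * (σ ^ 2).toNNReal =
      ((σ * √(∑ j, w j ^ 2)) ^ 2).toNNReal := by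
    ext
    push_cast
    simp only [Real.coe_toNNReal _ (sq_nonneg _)]
    rw [mul_pow, sq_sqrt (Finset.sum_nonneg fun j _ ↦ sq_nonneg _), ← Finset.sum_mul, mul_comm]
  simp_rw [← sub_sub]
  rw [← integral_map (φ := fun x : Fin d → ℝ ↦ ∑ j, w j * x j) (f := fun y ↦ max 0 (1 - c - y))
      (Measurable.aemeasurable (by fun_prop)) (by fun_prop), pi_gaussianReal_map_sum_mul, hvar,
    integral_max_zero_sub_gaussianReal _ _ (mul_pos hσ hw)]

/-- Theorem 1 of the paper: closed form for the expected positive-class hinge loss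
under the isotropic Gaussian `N(x_i, σ²I)`. -/
theorem expected_hinge_loss_closed_form
    (d : ℕ) (hd : 0 < d) (xi : Fin d → ℝ) (σ : ℝ) (hσ : 0 < σ)
    (c : ℝ) (w : Fin d → ℝ)
    (hw : 0 < Real.sqrt (∑ j, (w j) ^ 2)) :
    (∫ x, max 0 (1 - (c + ∑ j, w j * x j))
        ∂(Measure.pi fun j => gaussianReal (xi j) (Real.toNNReal (σ ^ 2)))) =
      (1 - (c + ∑ j, w j * xi j)) *
          stdGaussianCDF ((1 - (c + ∑ j, w j * xi j)) / (σ * Real.sqrt (∑ j, (w j) ^ 2))) +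
        σ * Real.sqrt (∑ j, (w j) ^ 2) *
          stdGaussianPDF ((1 - (c + ∑ j, w j * xi j)) / (σ * Real.sqrt (∑ j, (w j) ^ 2))) :=
  expected_hinge_loss_closed_form_general d xi σ hσ c w hw
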